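/- Let V be a finite-dimensional vector space over a field of characteristic zero, let A, B be endomorphisms of V, let i ∈ V and let j be a linear functional on V, and suppose that AB − BA + i⊗j = 0 (where i⊗j denotes the rank-one endomorphism v ↦ j(v)·i). If the only subspace of V that is stable under both A and B and contains i is V itself, then AB = BA and j = 0. -/

import Mathlib

open LinearMap TensorProduct

namespace Stmt0Aux

variable {K V : Type*} [Field K] [AddCommGroup V] [Module K V]

/-- product of a word in A (`true`) and B (`false`) -/
def wp (A B : V →ₗ[K] V) : List Bool → (V →ₗ[K] V)
  | [] => 1
  | x :: w => (cond x A B) * wp A B w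

lemma wp_append (A B : V →ₗ[K] V) (u v : List Bool) :
    wp A B (u ++ v) = wp A B u * wp A B v := by
  induction u with
  | nil => simp [wp]
  | cons x u ih => simp [wp, ih, mul_assoc]

/-- scalar value of a word applied to i, paired with j -/
def fv (A B : V →ₗ[K] V) (i : V) (j : V →ₗ[K] K) (w : List Bool) : K :=
  j (wp A B w i)

variable (A B : V →ₗ[K] V) (i : V) (j : V →ₗ[K] K)

lemma count_tf (w : List Bool) : w.count true + w.count false = w.length := by
  induction w with
  | nil => simp
  | cons x w ih =>
    cases x <;> simp [List.count_cons] <;> omega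

lemma rep_shift (n : ℕ) (x : Bool) :
    List.replicate n x ++ [x] = x :: List.replicate n x := by
  rw [← List.replicate_succ', List.replicate_succ]

lemma rep_cons (n : ℕ) (x : Bool) (l : List Bool) :
    List.replicate n x ++ x :: l = x :: (List.replicate n x ++ l) := by
  induction n with
  | zero => simp
  | succ n ih => simp [List.replicate_succ, ih]

lemma wp_swap_op (hm : B * A = A * B + j.smulRight i) (u v : List Bool) :
    wp A B (u ++ false :: true :: v) =
      wp A B (u ++ true :: false :: v) + (wp A B u * j.smulRight i) * wp A B v := by
  have h2 : wp A B (false :: true :: v) = (B * A) * wp A B v := by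
    simp [wp, mul_assoc]
  have h3 : wp A B (true :: false :: v) = (A * B) * wp A B v := by
    simp [wp, mul_assoc]
  rw [wp_append, wp_append, h2, h3, hm, add_mul, mul_add, mul_assoc, mul_assoc]

lemma fv_swap (hm : B * A = A * B + j.smulRight i) (u v : List Bool) :
    fv A B i j (u ++ false :: true :: v) =
      fv A B i j (u ++ true :: false :: v) + fv A B i j v * fv A B i j u := by
  unfold fv
  rw [wp_swap_op A B i j hm u v, LinearMap.add_apply, map_add]
  congr 1
  simp [Module.End.mul_apply, LinearMap.smulRight_apply, map_smul, smul_eq_mul]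

section trace

variable [FiniteDimensional K V]

lemma tr_mul_smulRight (N : V →ₗ[K] V) :
    trace K V (N * j.smulRight i) = j (N i) := by
  have h : N * j.smulRight i = j.smulRight (N i) := by
    ext v
    simp [Module.End.mul_apply, LinearMap.smulRight_apply, map_smul]
  have h2 : j.smulRight (N i) = dualTensorHom K V V (j ⊗ₜ[K] (N i)) := by
    ext v
    simp [dualTensorHom_apply]
  rw [h, h2, trace_eq_contract_apply, contractLeft_apply]

lemma tau_rot (u v : List Bool) :
    trace K V (wp A B (u ++ v)) = trace K V (wp A B (v ++ u)) := by
  rw [wp_append, wp_append, trace_mul_comm]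

lemma tau_swap (hm : B * A = A * B + j.smulRight i) (u v : List Bool) :
    trace K V (wp A B (u ++ false :: true :: v)) =
      trace K V (wp A B (u ++ true :: false :: v)) + fv A B i j (v ++ u) := by
  rw [wp_swap_op A B i j hm u v, map_add]
  congr 1
  rw [trace_mul_comm, ← mul_assoc, ← wp_append, tr_mul_smulRight]
  rfl

lemma tau_move (hm : B * A = A * B + j.smulRight i) (a b : ℕ) (c : K)
    (hc : ∀ w : List Bool, w.count true = a → w.count false = b → fv A B i j w = c) :
    ∀ t s : ℕ, t + s = b →
      trace K V (wp A B (List.replicate a true ++ List.replicate t false ++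
          true :: (List.replicate s false ++ [false]))) =
      trace K V (wp A B (List.replicate a true ++
          true :: (List.replicate b false ++ [false]))) + (t : K) * c := by
  intro t
  induction t with
  | zero =>
    intro s hs
    have hsb : s = b := by omega
    subst hsb
    simp
  | succ t ih =>
    intro s hs
    have e1 : List.replicate a true ++ List.replicate (t + 1) false ++
        true :: (List.replicate s false ++ [false]) =
        (List.replicate a true ++ List.replicate t false) ++
          false :: true :: (List.replicate s false ++ [false]) := by
      simp [List.replicate_succ', List.append_assoc]
    rw [e1, tau_swap A B i j hm (List.replicate a true ++ List.replicate t false)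
      (List.replicate s false ++ [false])]
    have e2 : (List.replicate a true ++ List.replicate t false) ++
        true :: false :: (List.replicate s false ++ [false]) =
        List.replicate a true ++ List.replicate t false ++
          true :: (List.replicate (s + 1) false ++ [false]) := by
      simp [List.replicate_succ, List.append_assoc]
    rw [e2, ih (s + 1) (by omega)]
    have e3 : fv A B i j ((List.replicate s false ++ [false]) ++
        (List.replicate a true ++ List.replicate t false)) = c := by
      apply hc
      · simp [List.count_append, List.count_replicate]
      · simp [List.count_append, List.count_replicate]
        omega
    rw [e3]
    push_cast
    ring

end trace

lemma move_one {n : ℕ} (hz : ∀ u : List Bool, u.length < n → fv A B i j u = 0)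
    (hm : B * A = A * B + j.smulRight i) :
    ∀ (a : ℕ) (p z : List Bool), p.length + a + 1 + z.length ≤ n →
      fv A B i j (p ++ false :: (List.replicate a true ++ z)) =
      fv A B i j (p ++ (List.replicate a true ++ false :: z)) := by
  intro a
  induction a with
  | zero => intro p z h; simp
  | succ a ih =>
    intro p z h
    have hp : fv A B i j p = 0 := hz p (by omega)
    have h1 := fv_swap A B i j hm p (List.replicate a true ++ z)
    rw [hp, mul_zero, add_zero] at h1
    have e1 : p ++ false :: (List.replicate (a + 1) true ++ z) =
        p ++ false :: true :: (List.replicate a true ++ z) := by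
      simp [List.replicate_succ]
    have e2 : p ++ true :: false :: (List.replicate a true ++ z) =
        (p ++ [true]) ++ false :: (List.replicate a true ++ z) := by
      simp
    have e3 : (p ++ [true]) ++ (List.replicate a true ++ false :: z) =
        p ++ (List.replicate (a + 1) true ++ false :: z) := by
      simp [List.replicate_succ]
    rw [e1, h1, e2, ih (p ++ [true]) z (by simp; omega), e3]

lemma sort_words {n : ℕ} (hz : ∀ u : List Bool, u.length < n → fv A B i j u = 0)
    (hm : B * A = A * B + j.smulRight i) :
    ∀ (w p : List Bool), p.length + w.length ≤ n →
      fv A B i j (p ++ w) =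
      fv A B i j (p ++ (List.replicate (w.count true) true ++
        List.replicate (w.count false) false)) := by
  intro w
  induction w with
  | nil => intro p h; simp
  | cons x w ih =>
    intro p h
    have hlen : (x :: w).length = w.length + 1 := by simp
    cases x
    · -- x = false
      have h1 := ih (p ++ [false]) (by
        have := h; rw [hlen] at this; simp only [List.length_append, List.length_cons,
          List.length_nil]; omega)
      have e1 : (p ++ [false]) ++ w = p ++ false :: w := by simp
      rw [e1] at h1
      rw [h1]
      have hab := count_tf w
      have h2 := move_one A B i j hz hm (w.count true) p
        (List.replicate (w.count false) false) (by
          have := h; rw [hlen] at this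
          simp only [List.length_replicate]; omega)
      have e2 : (p ++ [false]) ++ (List.replicate (w.count true) true ++
          List.replicate (w.count false) false) =
          p ++ false :: (List.replicate (w.count true) true ++
            List.replicate (w.count false) false) := by simp
      rw [e2, h2]
      have e3 : (false :: w).count true = w.count true := by simp [List.count_cons]
      have e4 : (false :: w).count false = w.count false + 1 := by simp [List.count_cons]
      rw [e3, e4]
      have e5 : List.replicate (w.count false + 1) false =
          false :: List.replicate (w.count false) false := List.replicate_succ
      rw [e5]
    · -- x = true
      have h1 := ih (p ++ [true]) (by
        have := h; rw [hlen] at this; simp only [List.length_append, List.length_cons,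
          List.length_nil]; omega)
      have e1 : (p ++ [true]) ++ w = p ++ true :: w := by simp
      rw [e1] at h1
      rw [h1]
      have e3 : (true :: w).count true = w.count true + 1 := by simp [List.count_cons]
      have e4 : (true :: w).count false = w.count false := by simp [List.count_cons]
      rw [e3, e4]
      simp [List.replicate_succ, List.append_assoc]

variable [FiniteDimensional K V] [CharZero K]

lemma fv_zero_of_len (hm : B * A = A * B + j.smulRight i) :
    ∀ n : ℕ, ∀ w : List Bool, w.length = n → fv A B i j w = 0 := by
  intro n
  induction n using Nat.strong_induction_on with
  | _ n ih =>
    intro w hw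
    have hz : ∀ u : List Bool, u.length < n → fv A B i j u = 0 :=
      fun u hu => ih u.length hu u rfl
    obtain ⟨a, ha⟩ : ∃ a, w.count true = a := ⟨_, rfl⟩
    obtain ⟨b, hb⟩ : ∃ b, w.count false = b := ⟨_, rfl⟩
    have habn : a + b = n := by
      have := count_tf w; omega
    obtain ⟨c, hcd⟩ : ∃ c, fv A B i j (List.replicate a true ++ List.replicate b false) = c :=
      ⟨_, rfl⟩
    have hsorted : ∀ w' : List Bool, w'.count true = a → w'.count false = b →
        fv A B i j w' = c := by
      intro w' h1 h2
      have hlen : w'.length = n := by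
        have := count_tf w'; omega
      have h3 := sort_words A B i j hz hm w' [] (by simp [hlen])
      simp only [List.nil_append] at h3
      rw [h3, h1, h2, hcd]
    have hcw : fv A B i j w = c := hsorted w ha hb
    rw [hcw]
    -- now show c = 0 using the trace relation
    have hT : j.smulRight i = B * A - A * B := eq_sub_of_add_eq' hm.symm
    have e0 : c = trace K V (wp A B (List.replicate a true ++ List.replicate b false)
        * j.smulRight i) := by
      rw [tr_mul_smulRight, ← hcd]; rfl
    have hFT : wp A B [false, true] = B * A := by simp [wp]
    have hTF : wp A B [true, false] = A * B := by simp [wp]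
    have t1 : trace K V (wp A B ((List.replicate a true ++ List.replicate b false)
          ++ [false, true])) =
        trace K V (wp A B (List.replicate a true ++ List.replicate b false) * (B * A)) := by
      rw [wp_append, hFT]
    have t2 : trace K V (wp A B ((List.replicate a true ++ List.replicate b false)
          ++ [true, false])) =
        trace K V (wp A B (List.replicate a true ++ List.replicate b false) * (A * B)) := by
      rw [wp_append, hTF]
    have e1 : c = trace K V (wp A B ((List.replicate a true ++ List.replicate b false)
          ++ [false, true]))
        - trace K V (wp A B ((List.replicate a true ++ List.replicate b false)
          ++ [true, false])) := by
      rw [e0, hT, mul_sub, map_sub, t1, t2]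
    have e2 : trace K V (wp A B ((List.replicate a true ++ List.replicate b false)
          ++ [false, true])) =
        trace K V (wp A B (List.replicate (a + 1) true ++ List.replicate (b + 1) false)) := by
      have r := tau_rot A B ((List.replicate a true ++ List.replicate b false) ++ [false]) [true]
      have l1 : (List.replicate a true ++ List.replicate b false) ++ [false, true] =
          ((List.replicate a true ++ List.replicate b false) ++ [false]) ++ [true] := by simp
      have l2 : [true] ++ ((List.replicate a true ++ List.replicate b false) ++ [false]) =
          List.replicate (a + 1) true ++ List.replicate (b + 1) false := by
        simp [List.replicate_succ, rep_shift, rep_cons, List.append_assoc]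
      rw [l1, r, l2]
    have htau := tau_move A B i j hm a b c hsorted b 0 (by omega)
    have e3 : trace K V (wp A B ((List.replicate a true ++ List.replicate b false)
          ++ [true, false])) =
        trace K V (wp A B (List.replicate (a + 1) true ++ List.replicate (b + 1) false))
          + (b : K) * c := by
      have l3 : List.replicate a true ++ List.replicate b false ++
          true :: (List.replicate 0 false ++ [false]) =
          (List.replicate a true ++ List.replicate b false) ++ [true, false] := by simp
      have l4 : List.replicate a true ++ true :: (List.replicate b false ++ [false]) =
          List.replicate (a + 1) true ++ List.replicate (b + 1) false := by
        simp [List.replicate_succ, rep_shift, rep_cons, List.append_assoc]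
      rw [l3, l4] at htau
      exact htau
    have e5 : c = -((b : K) * c) := by
      have h6 := e1
      rw [e2, e3] at h6
      linear_combination h6
    have e6 : ((b : K) + 1) * c = 0 := by linear_combination e5
    have hb1 : ((b : K) + 1) ≠ 0 := by
      have : ((b + 1 : ℕ) : K) ≠ 0 := Nat.cast_ne_zero.mpr (Nat.succ_ne_zero b)
      push_cast at this
      exact this
    exact (mul_eq_zero.mp e6).resolve_left hb1

end Stmt0Aux

/-- If (A,B,i,j) satisfies [A,B] + i⊗j = 0 and i generates V under A,B
(stability), then AB = BA and j = 0. -/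
theorem stmt_0 {K V : Type*} [Field K] [CharZero K] [AddCommGroup V] [Module K V]
    [FiniteDimensional K V] (A B : V →ₗ[K] V) (i : V) (j : V →ₗ[K] K)
    (hmoment : A ∘ₗ B - B ∘ₗ A + j.smulRight i = 0)
    (hstable : ∀ U : Submodule K V,
      (∀ v ∈ U, A v ∈ U) → (∀ v ∈ U, B v ∈ U) → i ∈ U → U = ⊤) :
    A ∘ₗ B = B ∘ₗ A ∧ j = 0 := by
  have hm : B * A = A * B + j.smulRight i := by
    have h2 : A ∘ₗ B + j.smulRight i - B ∘ₗ A = 0 := by rw [← hmoment]; abel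
    have h3 := sub_eq_zero.mp h2
    rw [Module.End.mul_eq_comp, Module.End.mul_eq_comp]
    exact h3.symm
  have hall : ∀ w : List Bool, Stmt0Aux.fv A B i j w = 0 :=
    fun w => Stmt0Aux.fv_zero_of_len A B i j hm w.length w rfl
  set U : Submodule K V :=
    Submodule.span K (Set.range fun w : List Bool => Stmt0Aux.wp A B w i) with hUdef
  have hAle : ∀ v ∈ U, A v ∈ U := by
    intro v hv
    have hle : U ≤ Submodule.comap A U := by
      rw [hUdef, Submodule.span_le]
      rintro x ⟨w, rfl⟩
      simp only [SetLike.mem_coe, Submodule.mem_comap]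
      exact Submodule.subset_span ⟨true :: w, by simp [Stmt0Aux.wp, Module.End.mul_apply]⟩
    exact hle hv
  have hBle : ∀ v ∈ U, B v ∈ U := by
    intro v hv
    have hle : U ≤ Submodule.comap B U := by
      rw [hUdef, Submodule.span_le]
      rintro x ⟨w, rfl⟩
      simp only [SetLike.mem_coe, Submodule.mem_comap]
      exact Submodule.subset_span ⟨false :: w, by simp [Stmt0Aux.wp, Module.End.mul_apply]⟩
    exact hle hv
  have hiU : i ∈ U := Submodule.subset_span ⟨[], by simp [Stmt0Aux.wp]⟩
  have hU : U = ⊤ := hstable U hAle hBle hiU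
  have hUker : U ≤ LinearMap.ker j := by
    rw [hUdef, Submodule.span_le]
    rintro x ⟨w, rfl⟩
    simpa [LinearMap.mem_ker, Stmt0Aux.fv] using hall w
  have hker : LinearMap.ker j = ⊤ := top_le_iff.mp (hU ▸ hUker)
  have hj : j = 0 := LinearMap.ker_eq_top.mp hker
  refine ⟨?_, hj⟩
  have hsr : j.smulRight i = 0 := by
    rw [hj]; ext v; simp
  rw [hsr, add_zero] at hmoment
  exact sub_eq_zero.mp hmoment
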